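/- arXiv:1604.00858 — 4 statements merged into one kernel-verified Lean document; each statement's English description precedes it below -/
import Mathlib

section
/- For every integer n ≥ 2: if n is even then #{1 ≤ i ≤ 2^n : λ_i = 0} = 2·#{1 ≤ i ≤ 2^{n−1} : λ_i = 0} − 1, and if n is odd then #{1 ≤ i ≤ 2^n : λ_i = 0} = 2·#{1 ≤ i ≤ 2^{n−1} : λ_i = 0} + 1. -/
/-!
Both λ_{2j+1} = 1 - 2τ_j and λ_{2j} = τ_j + τ_{j-1} - 1 are determined by τ_j and τ_{j-1}.
Since τ only takes the values τ_0 and 1 - τ_0, the odd differences never vanish and λ_{2j}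
vanishes exactly when λ_j does not. Hence the zero count Z_n on [1, 2^n] satisfies
Z_{n+1} + Z_n = 2^n, so 3 Z_n = 2^n - (-1)^n, and the two parity cases follow.
-/

open Finset

structure ThueMorseRec (τ : ℕ → ℤ) : Prop where
  even : ∀ i, τ (2 * i) = τ i
  odd : ∀ i, τ (2 * i + 1) = 1 - τ i

namespace ThueMorseRec

variable {τ : ℕ → ℤ}

theorem eq_or_eq_one_sub (h : ThueMorseRec τ) (i : ℕ) : τ i = τ 0 ∨ τ i = 1 - τ 0 := by
  induction i using Nat.strong_induction_on with
  | _ i ih =>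
    obtain ⟨j, rfl | rfl⟩ := Nat.even_or_odd' i
    · rcases j.eq_zero_or_pos with rfl | hj
      · exact Or.inl rfl
      · rw [h.even]
        exact ih j (by omega)
    · rw [h.odd]
      rcases ih j (by omega) with hj | hj <;> omega

theorem odd_ne (h : ThueMorseRec τ) (j : ℕ) : τ (2 * j + 1) ≠ τ (2 * j) := by
  rw [h.odd, h.even]
  omega

theorem two_mul_eq_iff (h : ThueMorseRec τ) {j : ℕ} (hj : 1 ≤ j) :
    τ (2 * j) = τ (2 * j - 1) ↔ τ j ≠ τ (j - 1) := by
  rw [show 2 * j - 1 = 2 * (j - 1) + 1 by omega, h.odd, h.even]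
  rcases h.eq_or_eq_one_sub j with h1 | h1 <;> rcases h.eq_or_eq_one_sub (j - 1) with h2 | h2 <;>
    omega

theorem filter_Icc_two_mul (h : ThueMorseRec τ) (N : ℕ) :
    {i ∈ Icc 1 (2 * N) | τ i = τ (i - 1)} =
      {j ∈ Icc 1 N | τ j ≠ τ (j - 1)}.image (2 * ·) := by
  ext i
  simp only [mem_filter, mem_image, mem_Icc]
  constructor
  · rintro ⟨⟨hi1, hi2⟩, hi⟩
    obtain ⟨j, rfl | rfl⟩ := Nat.even_or_odd' i
    · exact ⟨j, ⟨⟨by omega, by omega⟩, (h.two_mul_eq_iff (by omega)).mp hi⟩, rfl⟩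
    · exact absurd hi (h.odd_ne j)
  · rintro ⟨j, ⟨⟨hj1, hj2⟩, hj⟩, rfl⟩
    exact ⟨⟨by omega, by omega⟩, (h.two_mul_eq_iff hj1).mpr hj⟩

theorem card_filter_Icc_two_mul_add (h : ThueMorseRec τ) (N : ℕ) :
    #{i ∈ Icc 1 (2 * N) | τ i = τ (i - 1)} + #{i ∈ Icc 1 N | τ i = τ (i - 1)} = N := by
  rw [h.filter_Icc_two_mul, card_image_of_injective _ (fun a b hab => by omega), add_comm,
    card_filter_add_card_filter_not, Nat.card_Icc, Nat.add_sub_cancel]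

theorem card_filter_Icc_two_pow_succ_add (h : ThueMorseRec τ) (n : ℕ) :
    #{i ∈ Icc 1 (2 ^ (n + 1)) | τ i = τ (i - 1)} + #{i ∈ Icc 1 (2 ^ n) | τ i = τ (i - 1)} =
      2 ^ n := by
  rw [pow_succ', h.card_filter_Icc_two_mul_add]

theorem three_mul_card_filter_Icc_two_pow (h : ThueMorseRec τ) (n : ℕ) :
    3 * (#{i ∈ Icc 1 (2 ^ n) | τ i = τ (i - 1)} : ℤ) = 2 ^ n - (-1) ^ n := by
  induction n with
  | zero => simpa using h.odd_ne 0
  | succ n ih =>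
    have hsum := h.card_filter_Icc_two_pow_succ_add n
    zify at hsum
    rw [pow_succ (2 : ℤ), pow_succ (-1 : ℤ)]
    linarith

end ThueMorseRec

theorem stmt9_general (τ : ℕ → ℤ) (hτe : ∀ i, τ (2 * i) = τ i)
    (hτo : ∀ i, τ (2 * i + 1) = 1 - τ i)
    (lam : ℕ → ℤ) (hlam : ∀ i, 1 ≤ i → lam i = τ i - τ (i - 1)) :
    ∀ n : ℕ, 2 ≤ n →
      (Even n →
        ((((Finset.Icc 1 (2 ^ n)).filter (fun i => lam i = 0)).card : ℤ) =
          2 * (((Finset.Icc 1 (2 ^ (n - 1))).filter (fun i => lam i = 0)).card : ℤ) - 1)) ∧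
      (Odd n →
        ((((Finset.Icc 1 (2 ^ n)).filter (fun i => lam i = 0)).card : ℤ) =
          2 * (((Finset.Icc 1 (2 ^ (n - 1))).filter (fun i => lam i = 0)).card : ℤ) + 1)) := by
  have h : ThueMorseRec τ := ⟨hτe, hτo⟩
  have hzero (N : ℕ) : {i ∈ Icc 1 N | lam i = 0} = {i ∈ Icc 1 N | τ i = τ (i - 1)} :=
    filter_congr fun i hi => by rw [hlam i (mem_Icc.mp hi).1, sub_eq_zero]
  intro n hn
  obtain ⟨m, rfl⟩ : ∃ m, n = m + 1 := ⟨n - 1, by omega⟩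
  simp only [hzero, Nat.add_sub_cancel]
  have hsum := h.card_filter_Icc_two_pow_succ_add m
  zify at hsum
  have h3 := h.three_mul_card_filter_Icc_two_pow (m + 1)
  rw [pow_succ (2 : ℤ)] at h3
  refine ⟨fun he => ?_, fun ho => ?_⟩
  · rw [he.neg_one_pow] at h3
    linarith
  · rw [ho.neg_one_pow] at h3
    linarith

theorem stmt9 (τ : ℕ → ℤ) (hτ0 : τ 0 = 0) (hτe : ∀ i, τ (2 * i) = τ i)
    (hτo : ∀ i, τ (2 * i + 1) = 1 - τ i)
    (lam : ℕ → ℤ) (hlam : ∀ i, 1 ≤ i → lam i = τ i - τ (i - 1)) :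
    ∀ n : ℕ, 2 ≤ n →
      (Even n →
        ((((Finset.Icc 1 (2 ^ n)).filter (fun i => lam i = 0)).card : ℤ) =
          2 * (((Finset.Icc 1 (2 ^ (n - 1))).filter (fun i => lam i = 0)).card : ℤ) - 1)) ∧
      (Odd n →
        ((((Finset.Icc 1 (2 ^ n)).filter (fun i => lam i = 0)).card : ℤ) =
          2 * (((Finset.Icc 1 (2 ^ (n - 1))).filter (fun i => lam i = 0)).card : ℤ) + 1)) :=
  stmt9_general τ hτe hτo lam hlam
end

section
/- For every integer n ≥ 1, (#{1 ≤ i ≤ 2^n : λ_i = 0})/2^n = −∑_{i=1}^{n} (−1/2)^i (equivalently, #{1 ≤ i ≤ 2^n : λ_i = 0} = (2^n − (−1)^n)/3). -/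
/-!
λ vanishes at no odd index, since λ_{2k+1} = 1 - 2τ_k. At an even index,
λ_{2k} = τ_k + τ_{k-1} - 1, and as τ only takes the two values τ_0 and 1 - τ_0, this vanishes
exactly when λ_k does not. So the zeros of λ in [1, 2^{n+1}] are the doubles of the non-zeros
in [1, 2^n]: writing Z_n for their number, Z_{n+1} = 2^n - Z_n and Z_0 = 0, whence
3 Z_n = 2^n - (-1)^n.
-/

open Finset

section Counting

variable {p : ℕ → Prop} [DecidablePred p]

lemma filter_Icc_two_mul_eq_image (hodd : ∀ k, ¬ p (2 * k + 1))
    (heven : ∀ k, 1 ≤ k → (p (2 * k) ↔ ¬ p k)) (N : ℕ) :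
    (Icc 1 (2 * N)).filter p = ((Icc 1 N).filter (¬ p ·)).image (2 * ·) := by
  ext i
  simp only [mem_filter, mem_Icc, mem_image]
  constructor
  · rintro ⟨⟨hi1, hi2⟩, hpi⟩
    obtain ⟨k, rfl | rfl⟩ := Nat.even_or_odd' i
    · exact ⟨k, ⟨⟨by omega, by omega⟩, (heven k (by omega)).mp hpi⟩, rfl⟩
    · exact absurd hpi (hodd k)
  · rintro ⟨k, ⟨⟨hk1, hk2⟩, hpk⟩, rfl⟩
    exact ⟨⟨by omega, by omega⟩, (heven k hk1).mpr hpk⟩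

lemma card_filter_Icc_two_mul_add (hodd : ∀ k, ¬ p (2 * k + 1))
    (heven : ∀ k, 1 ≤ k → (p (2 * k) ↔ ¬ p k)) (N : ℕ) :
    #((Icc 1 (2 * N)).filter p) + #((Icc 1 N).filter p) = N := by
  rw [filter_Icc_two_mul_eq_image hodd heven,
    card_image_of_injective _ (mul_right_injective₀ two_ne_zero), add_comm,
    card_filter_add_card_filter_not, Nat.card_Icc, Nat.add_sub_cancel]

lemma three_mul_card_filter_Icc_two_pow (hodd : ∀ k, ¬ p (2 * k + 1))
    (heven : ∀ k, 1 ≤ k → (p (2 * k) ↔ ¬ p k)) (n : ℕ) :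
    3 * (#((Icc 1 (2 ^ n)).filter p) : ℤ) = 2 ^ n - (-1) ^ n := by
  induction n with
  | zero => simpa using hodd 0
  | succ n ih =>
    have hstep :
        (#((Icc 1 (2 ^ (n + 1))).filter p) : ℤ) + #((Icc 1 (2 ^ n)).filter p) = 2 ^ n := by
      rw [pow_succ']
      exact_mod_cast card_filter_Icc_two_mul_add hodd heven (2 ^ n)
    linear_combination 3 * hstep - ih

end Counting

section ThueMorse

variable {τ : ℕ → ℤ} (hτe : ∀ i, τ (2 * i) = τ i)
  (hτo : ∀ i, τ (2 * i + 1) = 1 - τ i)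
include hτe hτo

lemma eq_or_eq_one_sub_of_thueMorse (i : ℕ) : τ i = τ 0 ∨ τ i = 1 - τ 0 := by
  induction i using Nat.strong_induction_on with
  | _ i ih =>
    obtain ⟨k, rfl | rfl⟩ := Nat.even_or_odd' i
    · rcases Nat.eq_zero_or_pos k with rfl | hk
      · exact Or.inl rfl
      · rw [hτe]; exact ih k (by omega)
    · rw [hτo]; rcases ih k (by omega) with h | h <;> omega

variable {lam : ℕ → ℤ} (hlam : ∀ i, 1 ≤ i → lam i = τ i - τ (i - 1))
include hlam

lemma thueMorse_diff_odd_ne_zero (k : ℕ) : lam (2 * k + 1) ≠ 0 := by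
  rw [hlam _ (by omega), Nat.add_sub_cancel, hτo, hτe]
  omega

lemma thueMorse_diff_even_eq_zero_iff {k : ℕ} (hk : 1 ≤ k) :
    lam (2 * k) = 0 ↔ lam k ≠ 0 := by
  have hpred : 2 * k - 1 = 2 * (k - 1) + 1 := by omega
  rw [hlam _ (by omega), hlam k hk, hpred, hτo, hτe]
  rcases eq_or_eq_one_sub_of_thueMorse hτe hτo k with h | h <;>
    rcases eq_or_eq_one_sub_of_thueMorse hτe hτo (k - 1) with h' | h' <;> omega

end ThueMorse

lemma sum_Icc_neg_half_pow (n : ℕ) :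
    ∑ i ∈ Icc 1 n, (-1 / 2 : ℝ) ^ i = -(1 - (-1 / 2 : ℝ) ^ n) / 3 := by
  induction n with
  | zero => simp
  | succ m ih =>
    rw [sum_Icc_succ_top (by omega), ih, pow_succ]
    ring

theorem stmt10_general (τ : ℕ → ℤ) (hτe : ∀ i, τ (2 * i) = τ i)
    (hτo : ∀ i, τ (2 * i + 1) = 1 - τ i)
    (lam : ℕ → ℤ) (hlam : ∀ i, 1 ≤ i → lam i = τ i - τ (i - 1)) :
    ∀ n : ℕ, 1 ≤ n →
      ((((Finset.Icc 1 (2 ^ n)).filter (fun i => lam i = 0)).card : ℝ) / 2 ^ n =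
        -∑ i ∈ Finset.Icc 1 n, (-1 / 2 : ℝ) ^ i) := by
  intro n _
  have hcard : 3 * (((Icc 1 (2 ^ n)).filter (fun i => lam i = 0)).card : ℝ) =
      2 ^ n - (-1) ^ n := by
    exact_mod_cast three_mul_card_filter_Icc_two_pow
      (thueMorse_diff_odd_ne_zero hτe hτo hlam)
      (fun _ hk => thueMorse_diff_even_eq_zero_iff hτe hτo hlam hk) n
  rw [sum_Icc_neg_half_pow, div_pow]
  field_simp
  linarith

theorem stmt10 (τ : ℕ → ℤ) (hτ0 : τ 0 = 0) (hτe : ∀ i, τ (2 * i) = τ i)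
    (hτo : ∀ i, τ (2 * i + 1) = 1 - τ i)
    (lam : ℕ → ℤ) (hlam : ∀ i, 1 ≤ i → lam i = τ i - τ (i - 1)) :
    ∀ n : ℕ, 1 ≤ n →
      ((((Finset.Icc 1 (2 ^ n)).filter (fun i => lam i = 0)).card : ℝ) / 2 ^ n =
        -∑ i ∈ Finset.Icc 1 n, (-1 / 2 : ℝ) ^ i) :=
  stmt10_general τ hτe hτo lam hlam
end

section
/- The limit as n → ∞ of (#{1 ≤ i ≤ n : λ_i = 0})/n exists and equals 1/3. -/
/-!
Since `τ (2i) = τ i` and `τ (2i+1) = 1 - τ i`, the difference `λ` never vanishes at odd indices,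
and `λ (2j) = 0` exactly when `λ j ≠ 0`. Hence the number `a n` of zeros of `λ` in `[1, n]`
satisfies `a n + a (n / 2) = n / 2`, which forces `|3 a n - n| ≤ log₂ n + 1`, so `a n / n → 1/3`.
-/

open Filter Topology Finset

namespace ThueMorse

variable {τ : ℕ → ℤ} (hτe : ∀ i, τ (2 * i) = τ i) (hτo : ∀ i, τ (2 * i + 1) = 1 - τ i)
include hτe hτo

theorem apply_eq_or_eq_one_sub (i : ℕ) : τ i = τ 0 ∨ τ i = 1 - τ 0 := by
  induction i using Nat.strong_induction_on with
  | _ i ih =>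
    obtain ⟨j, rfl | rfl⟩ := Nat.even_or_odd' i
    · rcases j.eq_zero_or_pos with rfl | hj
      · exact Or.inl rfl
      · rw [hτe]; exact ih j (by omega)
    · rw [hτo]; rcases ih j (by omega) with h | h <;> rw [h] <;> omega

theorem apply_two_mul_add_one_ne (j : ℕ) : τ (2 * j + 1) ≠ τ (2 * j) := by
  rw [hτe, hτo]; omega

theorem apply_two_mul_eq_apply_pred_iff {j : ℕ} (hj : 1 ≤ j) :
    τ (2 * j) = τ (2 * j - 1) ↔ τ j ≠ τ (j - 1) := by
  rw [show 2 * j - 1 = 2 * (j - 1) + 1 by omega, hτe, hτo]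
  rcases apply_eq_or_eq_one_sub hτe hτo j with h | h <;>
    rcases apply_eq_or_eq_one_sub hτe hτo (j - 1) with h' | h' <;>
    rw [h, h'] <;> omega

end ThueMorse

theorem filter_Icc_eq_image_two_mul {p : ℕ → Prop} [DecidablePred p]
    (hodd : ∀ j, ¬p (2 * j + 1)) (heven : ∀ j, 1 ≤ j → (p (2 * j) ↔ ¬p j)) (n : ℕ) :
    {i ∈ Icc 1 n | p i} = {j ∈ Icc 1 (n / 2) | ¬p j}.image (2 * ·) := by
  ext i
  simp only [mem_filter, mem_image, mem_Icc]
  constructor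
  · rintro ⟨⟨hi1, hin⟩, hpi⟩
    obtain ⟨j, rfl | rfl⟩ := Nat.even_or_odd' i
    · exact ⟨j, ⟨⟨by omega, by omega⟩, (heven j (by omega)).mp hpi⟩, rfl⟩
    · exact absurd hpi (hodd j)
  · rintro ⟨j, ⟨⟨hj1, hjn⟩, hpj⟩, rfl⟩
    exact ⟨⟨by omega, by omega⟩, (heven j hj1).mpr hpj⟩

theorem card_filter_Icc_add_card_filter_Icc_div_two {p : ℕ → Prop} [DecidablePred p]
    (hodd : ∀ j, ¬p (2 * j + 1)) (heven : ∀ j, 1 ≤ j → (p (2 * j) ↔ ¬p j)) (n : ℕ) :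
    #{i ∈ Icc 1 n | p i} + #{i ∈ Icc 1 (n / 2) | p i} = n / 2 := by
  rw [filter_Icc_eq_image_two_mul hodd heven,
    card_image_of_injective _ (mul_right_injective₀ two_ne_zero), add_comm,
    card_filter_add_card_filter_not, Nat.card_Icc, Nat.add_sub_cancel]

theorem abs_three_mul_sub_le_log_add_one {a : ℕ → ℕ} (ha : ∀ n, a n + a (n / 2) = n / 2)
    (n : ℕ) : |3 * (a n : ℤ) - n| ≤ Nat.log 2 n + 1 := by
  induction n using Nat.strong_induction_on with
  | _ n ih =>
    rcases lt_or_ge n 2 with hn | hn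
    · have h0 := ha 0
      have h1 := ha 1
      interval_cases n <;> simp at h0 h1 <;> simp [h0, h1]
    · -- `3 a n - n = -(3 a (n / 2) - n / 2) - n % 2`: the error grows by at most one per halving
      have ih := abs_le.mp (ih (n / 2) (by omega))
      have := ha n
      rw [Nat.log_of_one_lt_of_le one_lt_two hn, abs_le]
      push_cast
      omega

theorem tendsto_natLog_two_div_self :
    Tendsto (fun n : ℕ => (Nat.log 2 n : ℝ) / n) atTop (𝓝 0) := by
  have hlogb : Tendsto (fun n : ℕ => Real.logb 2 n / n) atTop (𝓝 0) := by
    have := Real.tendsto_pow_logb_div_mul_add_atTop (b := 2) 1 0 1 one_ne_zero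
    simp only [pow_one, one_mul, add_zero] at this
    exact this.comp tendsto_natCast_atTop_atTop
  refine squeeze_zero (fun n => by positivity) (fun n => ?_) hlogb
  gcongr
  exact_mod_cast Real.natLog_le_logb n 2

theorem tendsto_div_of_add_apply_div_two_eq {a : ℕ → ℕ} (ha : ∀ n, a n + a (n / 2) = n / 2) :
    Tendsto (fun n => (a n : ℝ) / n) atTop (𝓝 (1 / 3)) := by
  have herr : Tendsto (fun n : ℕ => (Nat.log 2 n + 1 : ℝ) / (3 * n)) atTop (𝓝 0) := by
    simpa [add_div, mul_comm (3 : ℝ), ← div_div] using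
      (tendsto_natLog_two_div_self.add tendsto_one_div_atTop_nhds_zero_nat).div_const 3
  rw [tendsto_iff_norm_sub_tendsto_zero]
  refine squeeze_zero' (Eventually.of_forall fun n => norm_nonneg _) ?_ herr
  filter_upwards [eventually_gt_atTop 0] with n hn
  have hn : (0 : ℝ) < 3 * n := by positivity
  have hbound : |3 * (a n : ℝ) - n| ≤ Nat.log 2 n + 1 := by
    exact_mod_cast abs_three_mul_sub_le_log_add_one ha n
  calc ‖(a n : ℝ) / n - 1 / 3‖ = |(3 * (a n : ℝ) - n) / (3 * n)| := by
        rw [Real.norm_eq_abs]; congr 1; field_simp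
    _ = |3 * (a n : ℝ) - n| / (3 * n) := by rw [abs_div, abs_of_pos hn]
    _ ≤ (Nat.log 2 n + 1 : ℝ) / (3 * n) := by gcongr

theorem stmt11_general (τ : ℕ → ℤ) (hτe : ∀ i, τ (2 * i) = τ i)
    (hτo : ∀ i, τ (2 * i + 1) = 1 - τ i)
    (lam : ℕ → ℤ) (hlam : ∀ i, 1 ≤ i → lam i = τ i - τ (i - 1)) :
    Filter.Tendsto
      (fun n : ℕ => (((Finset.Icc 1 n).filter (fun i => lam i = 0)).card : ℝ) / n)
      Filter.atTop (nhds (1 / 3)) := by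
  have hfilter (n : ℕ) : {i ∈ Icc 1 n | lam i = 0} = {i ∈ Icc 1 n | τ i = τ (i - 1)} :=
    filter_congr fun i hi => by rw [hlam i (mem_Icc.mp hi).1, sub_eq_zero]
  simp only [hfilter]
  exact tendsto_div_of_add_apply_div_two_eq <|
    card_filter_Icc_add_card_filter_Icc_div_two (ThueMorse.apply_two_mul_add_one_ne hτe hτo)
      fun _ => ThueMorse.apply_two_mul_eq_apply_pred_iff hτe hτo

theorem stmt11 (τ : ℕ → ℤ) (hτ0 : τ 0 = 0) (hτe : ∀ i, τ (2 * i) = τ i)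
    (hτo : ∀ i, τ (2 * i + 1) = 1 - τ i)
    (lam : ℕ → ℤ) (hlam : ∀ i, 1 ≤ i → lam i = τ i - τ (i - 1)) :
    Filter.Tendsto
      (fun n : ℕ => (((Finset.Icc 1 n).filter (fun i => lam i = 0)).card : ℝ) / n)
      Filter.atTop (nhds (1 / 3)) :=
  stmt11_general τ hτe hτo lam hlam
end

section
/- For every α with (3 − √5)/2 < α < 1/2 there exists a positive integer n such that for every real number t having exactly one {-1,0,1} α-expansion (t_i)_{i≥1}, there are only finitely many indices k ≥ 1 with (t_k = 1 and t_{k+1} = t_{k+2} = ⋯ = t_{k+n} = 0), and only finitely many indices k ≥ 1 with (t_k = −1 and t_{k+1} = t_{k+2} = ⋯ = t_{k+n} = 0). -/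
open MeasureTheory Filter Real
open scoped MeasureTheory

noncomputable section

/-- The middle-`(1-2α)` Cantor set `Γ_α = {∑_{i≥1} ε_i α^i : ε_i ∈ {0,1}}`. -/
def Gamma (α : ℝ) : Set ℝ :=
  {x | ∃ ε : ℕ → ℝ, (∀ i, ε i = 0 ∨ ε i = 1) ∧ x = ∑' i : ℕ, ε i * α ^ (i + 1)}

/-- `a` is a `{-1,0,1}` `α`-expansion of `t`; `a i` is the digit `t_{i+1}`. -/
def IsExpansion (α t : ℝ) (a : ℕ → ℝ) : Prop :=
  (∀ i, a i = -1 ∨ a i = 0 ∨ a i = 1) ∧ t = ∑' i : ℕ, a i * α ^ (i + 1)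

/-- The set of `t` having exactly one `{-1,0,1}` `α`-expansion. -/
def uniqSet (α : ℝ) : Set ℝ := {t | ∃! a : ℕ → ℝ, IsExpansion α t a}

/-- `D_α`: possible Hausdorff dimensions of `Γ_α ∩ (Γ_α + t)` for `t ∈ u_α`. -/
def D (α : ℝ) : Set ℝ :=
  {d | ∃ t ∈ uniqSet α, d = (dimH (Gamma α ∩ ((· + t) '' Gamma α))).toReal}

/-!
Write `L = α/(1-α)` for the largest value of an expansion and `T_m` for the value of the
tail `∑_{i ≥ 0} t_{m+i} α^{i+1}` of an expansion, so `T_m = α (t_m + T_{m+1})` and `|T_m| ≤ L`.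
For `α ≥ 1/3` every point of `[-L, L]` has an expansion (greedy digits), so if a digit
`t_m ≠ 1` is followed by a tail `T_{m+1} ≥ 1 - L`, raising `t_m` by one and re-expanding
`T_{m+1} - 1 ∈ [-L, L]` gives a second expansion. Hence in a unique expansion
`T_{m+1} ≥ 1 - L` forces `t_m = 1`, and then `T_m = α (1 + T_{m+1}) ≥ 1 - L` again. A digit `1`
followed by `n` zeros has `T_k ≥ α (1 - α^n L)`, which is `≥ 1 - L` for large `n` exactly
because `1 - L < α`, i.e. `α > (3 - √5)/2`. So all digits before such a block are `1`, and
there is at most one block. Digits `-1` are handled by negating the expansion.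
-/

open scoped Topology

lemma abs_le_one_of_digit {e : ℝ} (h : e = -1 ∨ e = 0 ∨ e = 1) : |e| ≤ 1 := by
  rcases h with h | h | h <;> norm_num [h]

namespace IsExpansion

variable {α t : ℝ} {a : ℕ → ℝ}

lemma abs_le_one (ha : IsExpansion α t a) (i : ℕ) : |a i| ≤ 1 :=
  abs_le_one_of_digit (ha.1 i)

lemma neg (ha : IsExpansion α t a) : IsExpansion α (-t) (-a) := by
  refine ⟨fun i => ?_, ?_⟩
  · rcases ha.1 i with h | h | h <;> simp [h]
  · simp [ha.2, neg_mul, tsum_neg]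

end IsExpansion

section Tail

variable {α : ℝ} {a : ℕ → ℝ}

def tailSum (α : ℝ) (a : ℕ → ℝ) (m : ℕ) : ℝ := ∑' i, a (m + i) * α ^ (i + 1)

lemma tailSum_zero : tailSum α a 0 = ∑' i, a i * α ^ (i + 1) := by
  simp [tailSum]

lemma hasSum_pow_succ (h0 : 0 ≤ α) (h1 : α < 1) :
    HasSum (fun i : ℕ => α ^ (i + 1)) (α / (1 - α)) := by
  simpa [pow_succ, div_eq_inv_mul] using (hasSum_geometric_of_lt_one h0 h1).mul_right α

lemma summable_mul_pow_succ (h0 : 0 ≤ α) (h1 : α < 1) (ha : ∀ i, |a i| ≤ 1) :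
    Summable (fun i => a i * α ^ (i + 1)) := by
  refine (hasSum_pow_succ h0 h1).summable.of_norm_bounded fun i => ?_
  rw [Real.norm_eq_abs, abs_mul, abs_of_nonneg (pow_nonneg h0 (i + 1))]
  exact mul_le_of_le_one_left (pow_nonneg h0 (i + 1)) (ha i)

lemma abs_tsum_mul_pow_succ_le (h0 : 0 ≤ α) (h1 : α < 1) (ha : ∀ i, |a i| ≤ 1) :
    |∑' i, a i * α ^ (i + 1)| ≤ α / (1 - α) := by
  refine tsum_of_norm_bounded (f := fun i => a i * α ^ (i + 1)) (hasSum_pow_succ h0 h1) fun i => ?_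
  rw [Real.norm_eq_abs, abs_mul, abs_of_nonneg (pow_nonneg h0 (i + 1))]
  exact mul_le_of_le_one_left (pow_nonneg h0 (i + 1)) (ha i)

lemma abs_tailSum_le (h0 : 0 ≤ α) (h1 : α < 1) (ha : ∀ i, |a i| ≤ 1) (m : ℕ) :
    |tailSum α a m| ≤ α / (1 - α) :=
  abs_tsum_mul_pow_succ_le h0 h1 fun i => ha (m + i)

lemma tailSum_eq_sum_add (h0 : 0 ≤ α) (h1 : α < 1) (ha : ∀ i, |a i| ≤ 1) (m n : ℕ) :
    tailSum α a m =
      ∑ i ∈ Finset.range n, a (m + i) * α ^ (i + 1) + α ^ n * tailSum α a (m + n) := by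
  rw [tailSum, ← (summable_mul_pow_succ h0 h1 fun i => ha (m + i)).sum_add_tsum_nat_add n,
    tailSum, ← tsum_mul_left]
  congr 1
  refine tsum_congr fun i => ?_
  rw [show m + (i + n) = m + n + i by omega]
  ring

lemma tailSum_eq_mul_add (h0 : 0 ≤ α) (h1 : α < 1) (ha : ∀ i, |a i| ≤ 1) (m : ℕ) :
    tailSum α a m = α * (a m + tailSum α a (m + 1)) := by
  rw [tailSum_eq_sum_add h0 h1 ha m 1]
  simp only [Finset.sum_range_one, add_zero, zero_add, pow_one]
  ring

end Tail

section Greedy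

variable {α : ℝ}

lemma eq_tsum_of_eq_mul_add {y d : ℕ → ℝ} {B : ℝ} (h0 : 0 ≤ α) (h1 : α < 1)
    (hd : ∀ i, |d i| ≤ 1) (hy : ∀ n, |y n| ≤ B) (hrec : ∀ n, y n = α * (d n + y (n + 1))) :
    y 0 = ∑' i, d i * α ^ (i + 1) := by
  have hpartial : ∀ m, ∑ i ∈ Finset.range m, d i * α ^ (i + 1) = y 0 - α ^ m * y m := by
    intro m
    induction m with
    | zero => simp
    | succ m ih =>
      rw [Finset.sum_range_succ, ih, hrec m]
      ring
  have hvanish : Tendsto (fun m => α ^ m * y m) atTop (𝓝 0) := by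
    refine squeeze_zero_norm (fun m => ?_)
      (by simpa using (tendsto_pow_atTop_nhds_zero_of_lt_one h0 h1).mul_const B)
    rw [Real.norm_eq_abs, abs_mul, abs_of_nonneg (by positivity)]
    exact mul_le_mul_of_nonneg_left (hy m) (by positivity)
  refine tendsto_nhds_unique ?_ (summable_mul_pow_succ h0 h1 hd).hasSum.tendsto_sum_nat
  simp_rw [hpartial]
  simpa using tendsto_const_nhds.sub hvanish

-- Stated with an implication so that `choose` yields a digit function defined on all of `ℝ`.
lemma exists_digit_abs_sub_le {L : ℝ} (hL : 1 / 2 ≤ L) (w : ℝ) :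
    ∃ e : ℝ, (e = -1 ∨ e = 0 ∨ e = 1) ∧ (|w| ≤ 1 + L → |w - e| ≤ L) := by
  rcases lt_or_ge L w with hw | hw
  · exact ⟨1, by norm_num, fun h => by rw [abs_le] at h ⊢; constructor <;> linarith⟩
  rcases lt_or_ge w (-L) with hw' | hw'
  · exact ⟨-1, by norm_num, fun h => by rw [abs_le] at h ⊢; constructor <;> linarith⟩
  · exact ⟨0, by norm_num, fun _ => by rw [sub_zero, abs_le]; exact ⟨hw', hw⟩⟩

theorem exists_isExpansion_of_abs_le (h3 : 1 / 3 ≤ α) (h1 : α < 1) {x : ℝ}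
    (hx : |x| ≤ α / (1 - α)) : ∃ d, IsExpansion α x d := by
  set L := α / (1 - α) with hLdef
  have hα0 : 0 < α := by linarith
  have hL : 1 / 2 ≤ L := by rw [hLdef, le_div_iff₀ (by linarith)]; linarith
  have hαL : α * (1 + L) = L := by rw [hLdef]; field_simp [(by linarith : 1 - α ≠ 0)]; ring
  choose e he hle using exists_digit_abs_sub_le hL
  let y : ℕ → ℝ := fun n => Nat.rec x (fun _ z => z / α - e (z / α)) n
  have hy : ∀ n, |y n| ≤ L := by
    intro n
    induction n with
    | zero => exact hx
    | succ n ih =>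
      refine hle _ ?_
      rw [abs_div, abs_of_pos hα0, div_le_iff₀ hα0, mul_comm, hαL]
      exact ih
  refine ⟨fun n => e (y n / α), fun n => he _, ?_⟩
  refine eq_tsum_of_eq_mul_add hα0.le h1 (fun n => abs_le_one_of_digit (he _)) hy fun n => ?_
  change y n = α * (e (y n / α) + (y n / α - e (y n / α)))
  field_simp
  ring

end Greedy

section Unique

variable {α t : ℝ} {a : ℕ → ℝ}

theorem exists_ne_isExpansion (h3 : 1 / 3 ≤ α) (h1 : α < 1) (ha : IsExpansion α t a) {m : ℕ}
    (ham : a m ≠ 1) (hT : 1 - α / (1 - α) ≤ tailSum α a (m + 1)) :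
    ∃ b, IsExpansion α t b ∧ b ≠ a := by
  have h0 : 0 ≤ α := by linarith
  have hbound := abs_tailSum_le h0 h1 ha.abs_le_one (m + 1)
  obtain ⟨d, hd, hdx⟩ := exists_isExpansion_of_abs_le h3 h1 (x := tailSum α a (m + 1) - 1)
    (by rw [abs_le] at hbound ⊢; constructor <;> linarith)
  set b : ℕ → ℝ := fun i => if i < m then a i else if i = m then a m + 1 else d (i - (m + 1))
    with hb
  have hbm : b m = a m + 1 := by simp [hb]
  have hb_digit : ∀ i, b i = -1 ∨ b i = 0 ∨ b i = 1 := by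
    intro i
    rcases lt_trichotomy i m with hi | rfl | hi
    · simpa [hb, hi] using ha.1 i
    · rcases ha.1 i with h | h | h
      · norm_num [hbm, h]
      · norm_num [hbm, h]
      · exact absurd h ham
    · simpa [hb, hi.ne', hi.not_gt] using hd (i - (m + 1))
  have hb_abs : ∀ i, |b i| ≤ 1 := fun i => abs_le_one_of_digit (hb_digit i)
  have hb_tail : tailSum α b (m + 1) = tailSum α a (m + 1) - 1 := by
    rw [hdx, ← tailSum_zero]
    refine tsum_congr fun i => ?_
    simp [hb, show ¬ m + 1 + i < m by omega, show m + 1 + i ≠ m by omega]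
  have hb_head : ∑ i ∈ Finset.range m, b (0 + i) * α ^ (i + 1) =
      ∑ i ∈ Finset.range m, a (0 + i) * α ^ (i + 1) :=
    Finset.sum_congr rfl fun i hi => by simp [hb, Finset.mem_range.mp hi]
  refine ⟨b, ⟨hb_digit, ?_⟩, fun h => by simp [h] at hbm⟩
  rw [ha.2, ← tailSum_zero, ← tailSum_zero, tailSum_eq_sum_add h0 h1 ha.abs_le_one 0 m,
    tailSum_eq_sum_add h0 h1 hb_abs 0 m, hb_head, zero_add,
    tailSum_eq_mul_add h0 h1 ha.abs_le_one, tailSum_eq_mul_add h0 h1 hb_abs, hbm, hb_tail]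
  ring

lemma digit_eq_one_of_tailSum_ge (h3 : 1 / 3 ≤ α) (h1 : α < 1) (ha : IsExpansion α t a)
    (huniq : ∀ b, IsExpansion α t b → b = a) {m : ℕ}
    (hT : 1 - α / (1 - α) ≤ tailSum α a (m + 1)) : a m = 1 := by
  by_contra ham
  obtain ⟨b, hb, hne⟩ := exists_ne_isExpansion h3 h1 ha ham hT
  exact hne (huniq b hb)

lemma tailSum_ge_of_tailSum_succ_ge (h3 : 1 / 3 ≤ α) (h1 : α < 1) (ha : IsExpansion α t a)
    (huniq : ∀ b, IsExpansion α t b → b = a) {m : ℕ}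
    (hT : 1 - α / (1 - α) ≤ tailSum α a (m + 1)) : 1 - α / (1 - α) ≤ tailSum α a m := by
  rw [tailSum_eq_mul_add (by linarith) h1 ha.abs_le_one,
    digit_eq_one_of_tailSum_ge h3 h1 ha huniq hT]
  have hc : (1 - α / (1 - α)) * (1 - α) = 1 - 2 * α := by
    field_simp [(by linarith : 1 - α ≠ 0)]; ring
  nlinarith

lemma digit_eq_one_of_le (h3 : 1 / 3 ≤ α) (h1 : α < 1) (ha : IsExpansion α t a)
    (huniq : ∀ b, IsExpansion α t b → b = a) {k : ℕ} (hk : a k = 1)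
    (hT : 1 - α / (1 - α) ≤ tailSum α a k) {m : ℕ} (hm : m ≤ k) : a m = 1 := by
  rcases hm.lt_or_eq with hm | rfl
  · refine digit_eq_one_of_tailSum_ge h3 h1 ha huniq ?_
    exact Nat.decreasingInduction (motive := fun j _ => 1 - α / (1 - α) ≤ tailSum α a j)
      (fun j _ ih => tailSum_ge_of_tailSum_succ_ge h3 h1 ha huniq ih) hT hm
  · exact hk

lemma tailSum_ge_of_one_zeros (h0 : 0 ≤ α) (h1 : α < 1) (ha : ∀ i, |a i| ≤ 1) {n k : ℕ}
    (hn : 1 - α / (1 - α) ≤ α * (1 - α ^ n * (α / (1 - α)))) (hk : a k = 1)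
    (hzero : ∀ j < n, a (k + 1 + j) = 0) : 1 - α / (1 - α) ≤ tailSum α a k := by
  have hnext : tailSum α a (k + 1) = α ^ n * tailSum α a (k + 1 + n) := by
    rw [tailSum_eq_sum_add h0 h1 ha (k + 1) n,
      Finset.sum_eq_zero fun j hj => by rw [hzero j (Finset.mem_range.mp hj), zero_mul],
      zero_add]
  have hbound := (abs_le.mp (abs_tailSum_le h0 h1 ha (k + 1 + n))).1
  have hpow : 0 ≤ α ^ n := pow_nonneg h0 n
  rw [tailSum_eq_mul_add h0 h1 ha, hk, hnext]
  nlinarith [mul_le_mul_of_nonneg_left hbound (mul_nonneg h0 hpow)]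

lemma setOf_one_zeros_subsingleton (h3 : 1 / 3 ≤ α) (h1 : α < 1) (ha : IsExpansion α t a)
    (huniq : ∀ b, IsExpansion α t b → b = a) {n : ℕ} (hn0 : 0 < n)
    (hn : 1 - α / (1 - α) ≤ α * (1 - α ^ n * (α / (1 - α)))) :
    {k : ℕ | a k = 1 ∧ ∀ j < n, a (k + 1 + j) = 0}.Subsingleton := by
  have hlt : ∀ k k', a k = 1 ∧ (∀ j < n, a (k + 1 + j) = 0) →
      a k' = 1 ∧ (∀ j < n, a (k' + 1 + j) = 0) → ¬ k < k' := by
    rintro k k' ⟨-, hzero⟩ ⟨hk'1, hzero'⟩ hkk'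
    have hT := tailSum_ge_of_one_zeros (by linarith) h1 ha.abs_le_one hn hk'1 hzero'
    have h1' := digit_eq_one_of_le h3 h1 ha huniq hk'1 hT hkk'
    have h0' := hzero 0 hn0
    rw [add_zero] at h0'
    norm_num [h0'] at h1'
  intro k hk k' hk'
  by_contra hne
  rcases Nat.lt_or_gt_of_ne hne with h | h
  · exact hlt k k' hk hk' h
  · exact hlt k' k hk' hk h

end Unique

theorem stmt12 (α : ℝ) (hα1 : (3 - Real.sqrt 5) / 2 < α) (hα2 : α < 1 / 2) :
    ∃ n : ℕ, 0 < n ∧ ∀ (t : ℝ) (a : ℕ → ℝ), IsExpansion α t a →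
      (∀ b : ℕ → ℝ, IsExpansion α t b → b = a) →
      {k : ℕ | a k = 1 ∧ ∀ j < n, a (k + 1 + j) = 0}.Finite ∧
      {k : ℕ | a k = -1 ∧ ∀ j < n, a (k + 1 + j) = 0}.Finite := by
  have hsqrt : Real.sqrt 5 ^ 2 = 5 := Real.sq_sqrt (by norm_num)
  have h3 : 1 / 3 ≤ α := by nlinarith [Real.sqrt_nonneg 5]
  have h1 : α < 1 := by linarith
  have hgap : 1 - α / (1 - α) < α := by
    rw [sub_lt_comm, lt_div_iff₀ (by linarith)]
    nlinarith [Real.sqrt_nonneg 5]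
  have hlim : Tendsto (fun n => α * (1 - α ^ n * (α / (1 - α)))) atTop (𝓝 α) := by
    simpa using ((tendsto_pow_atTop_nhds_zero_of_lt_one (by linarith) h1).mul_const
      (α / (1 - α))).const_sub 1 |>.const_mul α
  obtain ⟨n, hn0, hn⟩ := ((eventually_gt_atTop 0).and (hlim.eventually_const_lt hgap)).exists
  refine ⟨n, hn0, fun t a ha huniq => ⟨?_, ?_⟩⟩
  · exact (setOf_one_zeros_subsingleton h3 h1 ha huniq hn0 hn.le).finite
  · have huniq' : ∀ b, IsExpansion α (-t) b → b = -a := fun b hb =>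
      neg_eq_iff_eq_neg.mp (huniq _ (by simpa using hb.neg))
    simpa [neg_eq_iff_eq_neg] using
      (setOf_one_zeros_subsingleton h3 h1 ha.neg huniq' hn0 hn.le).finite
end
end
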